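/- arXiv:2404.07037 — 2 statements merged into one kernel-verified Lean document; each statement's English description precedes it below -/
import Mathlib

section
/- Let (U, I) be a standard implicational base with closure operator cl, let c ∈ U, let U_c = {x ∈ U : c ∉ cl({x})}, and define I_c = {A → b ∈ I : A ∪ {b} ⊆ U_c} ∪ {A → b : A → d ∈ I, A ⊆ U_c, d ∉ U_c, b ∈ U_c \ cl^b(A)}, with closure operator cl_c on U_c. Then for every S ⊆ U_c: cl_c(S) = U_c if and only if c ∈ cl(S). (Assume U_c is not cl-closed.) -/
/-- `F` is closed for the implicational base `I`. -/
def ImpClosed {U : Type*} (I : Set (Set U × U)) (F : Set U) : Prop :=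
  ∀ p ∈ I, p.1 ⊆ F → p.2 ∈ F

/-- The closure operator induced by an implicational base `I`. -/
def clI {U : Type*} (I : Set (Set U × U)) (A : Set U) : Set U :=
  ⋂₀ {F | ImpClosed I F ∧ A ⊆ F}

/-- `cl^b(A) = ⋃_{a ∈ A} cl({a})`. -/
def clb {U : Type*} (cl : Set U → Set U) (A : Set U) : Set U := ⋃ a ∈ A, cl {a}

/-!
Write `T = cl_c(S)`; it always lies in `U_c`, which is `I_c`-closed. If `c ∉ cl(S)`, then
`cl(S)` is `I_c`-closed (an implication of the second kind would force some `d ∉ U_c`, hence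
`c`, into `cl(S)`), so `T = U_c` would give `cl(U_c) ⊆ cl(S)`; as `U_c` is not closed this
again puts some `d ∉ U_c`, hence `c`, into `cl(S)`. Conversely, if `c ∈ cl(S)` then `T` is not
`I`-closed, since `c ∉ U_c`. As `T` contains `cl({a})` for each of its points `a`, the failure
can only come from an implication `A → d ∈ I` with `A ⊆ T` and `d ∉ U_c`; then every
`b ∈ U_c` either lies in `cl^b(A) ⊆ T` or is the conclusion of the implication
`A → b ∈ I_c`.
-/

section ClosureOperator

variable {U : Type*} {I : Set (Set U × U)} {A F : Set U}

lemma subset_clI (I : Set (Set U × U)) (A : Set U) : A ⊆ clI I A :=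
  fun _ ha _ hF => hF.2 ha

lemma clI_subset_of_impClosed (hF : ImpClosed I F) (hAF : A ⊆ F) : clI I A ⊆ F :=
  fun _ hx => hx F ⟨hF, hAF⟩

lemma impClosed_clI (I : Set (Set U × U)) (A : Set U) : ImpClosed I (clI I A) :=
  fun p hp hsub F hF => hF.1 p hp fun _ hb => hsub hb F hF

lemma clI_singleton_subset {y : U} (hy : y ∈ clI I A) : clI I {y} ⊆ clI I A :=
  clI_subset_of_impClosed (impClosed_clI I A) (Set.singleton_subset_iff.mpr hy)

lemma clI_induction {X : Set U} (hA : A ⊆ X)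
    (hstep : ∀ B e, (B, e) ∈ I → B ⊆ X → B ⊆ clI I A → e ∈ X) : clI I A ⊆ X := by
  have hclosed : ImpClosed I (X ∩ clI I A) := fun p hp hsub =>
    ⟨hstep p.1 p.2 hp (fun _ hb => (hsub hb).1) (fun _ hb => (hsub hb).2),
      impClosed_clI I A p hp fun _ hb => (hsub hb).2⟩
  exact fun _ hx =>
    (clI_subset_of_impClosed hclosed (fun _ ha => ⟨hA ha, subset_clI I A ha⟩) hx).1

end ClosureOperator

section ReducedBase

variable {U : Type*} {I : Set (Set U × U)} {c : U} {F S Uc : Set U}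

/-- The set `U_c`. -/
def avoidSet (I : Set (Set U × U)) (c : U) : Set U := {x | c ∉ clI I {x}}

/-- The base `I_c`, for an arbitrary ground set `Uc`. -/
def reducedBase (I : Set (Set U × U)) (Uc : Set U) : Set (Set U × U) :=
  {p | p ∈ I ∧ p.1 ∪ {p.2} ⊆ Uc} ∪
    {p | ∃ d : U, (p.1, d) ∈ I ∧ p.1 ⊆ Uc ∧ d ∉ Uc ∧ p.2 ∈ Uc \ clb (clI I) p.1}

lemma not_mem_avoidSet_self : c ∉ avoidSet I c :=
  fun h => h (subset_clI I {c} rfl)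

lemma clI_singleton_subset_avoidSet {a : U} (ha : a ∈ avoidSet I c) :
    clI I {a} ⊆ avoidSet I c :=
  fun _ hx hcx => ha (clI_singleton_subset hx hcx)

lemma mem_of_not_mem_avoidSet {d : U} (hF : ImpClosed I F) (hd : d ∉ avoidSet I c)
    (hdF : d ∈ F) : c ∈ F :=
  clI_subset_of_impClosed hF (Set.singleton_subset_iff.mpr hdF) (not_not.mp hd)

lemma impClosed_reducedBase_self : ImpClosed (reducedBase I Uc) Uc := by
  rintro p (⟨-, hp⟩ | ⟨d, -, -, -, hb, -⟩) -
  · exact hp (Or.inr rfl)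
  · exact hb

lemma clI_reducedBase_subset (hS : S ⊆ Uc) : clI (reducedBase I Uc) S ⊆ Uc :=
  clI_subset_of_impClosed impClosed_reducedBase_self hS

lemma impClosed_reducedBase_of_impClosed (hF : ImpClosed I F) (hcF : c ∉ F) :
    ImpClosed (reducedBase I (avoidSet I c)) F := by
  rintro p (⟨hp, -⟩ | ⟨d, hd, -, hdc, -⟩) hsub
  · exact hF p hp hsub
  · exact absurd (mem_of_not_mem_avoidSet hF hdc (hF _ hd hsub)) hcF

lemma mem_clI_of_avoidSet_subset (hnot : clI I (avoidSet I c) ≠ avoidSet I c)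
    (h : avoidSet I c ⊆ clI I S) : c ∈ clI I S := by
  obtain ⟨y, hy, hyc⟩ := Set.not_subset.mp fun h' => hnot (h'.antisymm (subset_clI I _))
  exact mem_of_not_mem_avoidSet (impClosed_clI I S) hyc
    (clI_subset_of_impClosed (impClosed_clI I S) h hy)

lemma clI_singleton_subset_clI_reducedBase (hUc : ∀ a ∈ Uc, clI I {a} ⊆ Uc) (hS : S ⊆ Uc)
    {a : U} (ha : a ∈ clI (reducedBase I Uc) S) : clI I {a} ⊆ clI (reducedBase I Uc) S := by
  refine clI_induction (Set.singleton_subset_iff.mpr ha) fun B e hBe hBT hBa => ?_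
  have heUc : e ∈ Uc := hUc a (clI_reducedBase_subset hS ha) (impClosed_clI I {a} _ hBe hBa)
  refine impClosed_clI _ S (B, e) (Or.inl ⟨hBe, ?_⟩) hBT
  exact Set.union_subset (hBT.trans (clI_reducedBase_subset hS)) (Set.singleton_subset_iff.mpr heUc)

lemma subset_clI_reducedBase_of_exit (hUc : ∀ a ∈ Uc, clI I {a} ⊆ Uc) (hS : S ⊆ Uc)
    {p : Set U × U} (hp : p ∈ I) (hA : p.1 ⊆ clI (reducedBase I Uc) S) (hd : p.2 ∉ Uc) :
    Uc ⊆ clI (reducedBase I Uc) S := by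
  intro b hb
  by_cases hbA : b ∈ clb (clI I) p.1
  · obtain ⟨a, haA, hba⟩ := Set.mem_iUnion₂.mp hbA
    exact clI_singleton_subset_clI_reducedBase hUc hS (hA haA) hba
  · exact impClosed_clI _ S (p.1, b)
      (Or.inr ⟨p.2, hp, hA.trans (clI_reducedBase_subset hS), hd, hb, hbA⟩) hA

lemma impClosed_clI_reducedBase_of_no_exit (hS : S ⊆ Uc)
    (h : ∀ p ∈ I, p.1 ⊆ clI (reducedBase I Uc) S → p.2 ∈ Uc) :
    ImpClosed I (clI (reducedBase I Uc) S) := fun p hp hsub =>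
  impClosed_clI _ S p (Or.inl ⟨hp, Set.union_subset (hsub.trans (clI_reducedBase_subset hS))
    (Set.singleton_subset_iff.mpr (h p hp hsub))⟩) hsub

theorem clI_reducedBase_eq_avoidSet_iff (hnot : clI I (avoidSet I c) ≠ avoidSet I c)
    (hS : S ⊆ avoidSet I c) :
    clI (reducedBase I (avoidSet I c)) S = avoidSet I c ↔ c ∈ clI I S := by
  constructor
  · intro hT
    by_contra hcS
    refine hcS (mem_clI_of_avoidSet_subset hnot ?_)
    exact hT ▸ clI_subset_of_impClosed
      (impClosed_reducedBase_of_impClosed (impClosed_clI I S) hcS) (subset_clI I S)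
  · intro hcS
    refine (clI_reducedBase_subset hS).antisymm ?_
    by_cases hexit :
        ∃ p ∈ I, p.1 ⊆ clI (reducedBase I (avoidSet I c)) S ∧ p.2 ∉ avoidSet I c
    · obtain ⟨p, hp, hA, hd⟩ := hexit
      exact subset_clI_reducedBase_of_exit (fun _ => clI_singleton_subset_avoidSet) hS hp hA hd
    · push Not at hexit
      have hclosed := impClosed_clI_reducedBase_of_no_exit hS hexit
      have hcT := clI_subset_of_impClosed hclosed (subset_clI _ S) hcS
      exact absurd (clI_reducedBase_subset hS hcT) not_mem_avoidSet_self

end ReducedBase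

theorem stmt16_general {U : Type*} (I : Set (Set U × U))
    (c : U)
    (Uc : Set U) (hUc : Uc = {x : U | c ∉ clI I {x}})
    (hnotclosed : clI I Uc ≠ Uc)
    (Ic : Set (Set U × U))
    (hIc : Ic =
      {p | p ∈ I ∧ p.1 ∪ {p.2} ⊆ Uc} ∪
      {p | ∃ d : U, (p.1, d) ∈ I ∧ p.1 ⊆ Uc ∧ d ∉ Uc ∧
        p.2 ∈ Uc \ clb (clI I) p.1}) :
    ∀ S : Set U, S ⊆ Uc → (clI Ic S = Uc ↔ c ∈ clI I S) := by
  subst hUc hIc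
  exact fun S hS => clI_reducedBase_eq_avoidSet_iff hnotclosed hS

/-- for a standard implicational base `(U, I)`, `c ∈ U`,
`U_c = {x : c ∉ cl({x})}` not closed, and the derived base `I_c`, one has for
every `S ⊆ U_c`: `cl_c(S) = U_c` iff `c ∈ cl(S)`. -/
theorem stmt16 {U : Type*} [Fintype U] (I : Set (Set U × U))
    (hstd : ∀ x : U, ImpClosed I (clI I {x} \ {x}))
    (c : U)
    (Uc : Set U) (hUc : Uc = {x : U | c ∉ clI I {x}})
    (hnotclosed : clI I Uc ≠ Uc)
    (Ic : Set (Set U × U))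
    (hIc : Ic =
      {p | p ∈ I ∧ p.1 ∪ {p.2} ⊆ Uc} ∪
      {p | ∃ d : U, (p.1, d) ∈ I ∧ p.1 ⊆ Uc ∧ d ∉ Uc ∧
        p.2 ∈ Uc \ clb (clI I) p.1}) :
    ∀ S : Set U, S ⊆ Uc → (clI Ic S = Uc ↔ c ∈ clI I S) :=
  stmt16_general I c Uc hUc hnotclosed Ic hIc
end

section
/- Let (U, cs) be a standard closure system with closure operator cl, let a, c ∈ U, and suppose there is a meet-irreducible M ∈ Mi(cs) with c ↑ M ↓ a (i.e., c ↑ M, a ∉ M, and cl({a}) \ {a} ⊆ M), with a ≠ c. Then there exists a D-generator of c containing a; conversely, if a belongs to a D-generator of c, such an M exists. (Characterization of the D-relation via meet-irreducibles.) -/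
/-- The closure operator of a closure system `cs`. -/
def clOf {U : Type*} (cs : Set (Set U)) (A : Set U) : Set U :=
  ⋂₀ {F | F ∈ cs ∧ A ⊆ F}

/-- A closure system is standard if `cl({a}) \ {a}` is closed for every `a`. -/
def IsStandard {U : Type*} (cs : Set (Set U)) : Prop :=
  ∀ a : U, clOf cs {a} \ {a} ∈ cs

/-- `A` is a minimal generator of `c`. -/
def MinGen {U : Type*} (cl : Set U → Set U) (c : U) (A : Set U) : Prop :=
  c ∉ A ∧ c ∈ cl A ∧ ∀ A' ⊂ A, c ∉ cl A'

/-- `A` is a `D`-generator of `c`. -/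
def DGen {U : Type*} (cl : Set U → Set U) (c : U) (A : Set U) : Prop :=
  MinGen cl c A ∧ c ∉ clb cl A ∧
    ∀ A', MinGen cl c A' → A' ⊆ clb cl A → A' = A

/-- `M` is a meet-irreducible element of `cs`. -/
def MeetIrred {U : Type*} (cs : Set (Set U)) (M : Set U) : Prop :=
  M ∈ cs ∧ M ≠ Set.univ ∧
    ∀ F₁ ∈ cs, ∀ F₂ ∈ cs, F₁ ∩ F₂ = M → F₁ = M ∨ F₂ = M

/-- `c ↑ M`: `c ∉ M` and `c ∈ F` for every closed set `F` strictly above `M`. -/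
def Upp {U : Type*} (cs : Set (Set U)) (c : U) (M : Set U) : Prop :=
  c ∉ M ∧ ∀ F ∈ cs, M ⊂ F → c ∈ F

section Helpers

variable {U : Type*} [Fintype U] {cs : Set (Set U)}

lemma subset_clOf (A : Set U) : A ⊆ clOf cs A := by
  intro x hx
  rw [clOf, Set.mem_sInter]
  intro F hF
  exact hF.2 hx

lemma clOf_mono {A B : Set U} (h : A ⊆ B) : clOf cs A ⊆ clOf cs B := by
  intro x hx
  rw [clOf, Set.mem_sInter] at hx ⊢
  intro F hF
  exact hx F ⟨hF.1, h.trans hF.2⟩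

lemma clOf_subset {A F : Set U} (hF : F ∈ cs) (h : A ⊆ F) : clOf cs A ⊆ F :=
  Set.sInter_subset_of_mem ⟨hF, h⟩

lemma clOf_mem (huniv : Set.univ ∈ cs)
    (hinter : ∀ F₁ ∈ cs, ∀ F₂ ∈ cs, F₁ ∩ F₂ ∈ cs) (A : Set U) :
    clOf cs A ∈ cs := by
  classical
  have key : ∀ t : Finset (Set U), (↑t : Set (Set U)) ⊆ cs → ⋂₀ (↑t : Set (Set U)) ∈ cs := by
    intro t
    induction t using Finset.induction_on with
    | empty => intro _; simpa using huniv
    | insert _ _ hnotmem ih =>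
        intro hsub
        rw [Finset.coe_insert, Set.sInter_insert]
        refine hinter _ (hsub (by simp)) _ (ih ?_)
        intro F hF
        exact hsub (by simp [hF])
  have hfin : {F : Set U | F ∈ cs ∧ A ⊆ F}.Finite := Set.toFinite _
  have : clOf cs A = ⋂₀ (↑hfin.toFinset : Set (Set U)) := by
    rw [Set.Finite.coe_toFinset]; rfl
  rw [this]
  apply key
  rw [Set.Finite.coe_toFinset]
  exact fun F hF => hF.1

lemma clOf_of_mem {F : Set U} (hF : F ∈ cs) : clOf cs F = F :=
  le_antisymm (clOf_subset hF subset_rfl) (subset_clOf F)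

lemma clOf_trans (huniv : Set.univ ∈ cs)
    (hinter : ∀ F₁ ∈ cs, ∀ F₂ ∈ cs, F₁ ∩ F₂ ∈ cs) {A B : Set U}
    (h : A ⊆ clOf cs B) : clOf cs A ⊆ clOf cs B :=
  clOf_subset (clOf_mem huniv hinter B) h

lemma clOf_antisymm (huniv : Set.univ ∈ cs) (hstd : IsStandard cs) {x y : U}
    (hxy : x ∈ clOf cs {y}) (hyx : y ∈ clOf cs {x}) : x = y := by
  by_contra hne
  have h1 : x ∈ clOf cs {y} \ {y} := ⟨hxy, by simpa using hne⟩
  have h2 : clOf cs {x} ⊆ clOf cs {y} \ {y} :=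
    clOf_subset (hstd y) (by simpa using h1)
  exact (h2 hyx).2 rfl

lemma mem_clb {cl : Set U → Set U} {A : Set U} {x : U} :
    x ∈ clb cl A ↔ ∃ y ∈ A, x ∈ cl {y} := by
  simp [clb]

lemma subset_clb {A : Set U} : A ⊆ clb (clOf cs) A := by
  intro x hx
  exact mem_clb.mpr ⟨x, hx, subset_clOf _ rfl⟩

lemma clb_subset_clb (huniv : Set.univ ∈ cs)
    (hinter : ∀ F₁ ∈ cs, ∀ F₂ ∈ cs, F₁ ∩ F₂ ∈ cs) {A B : Set U}
    (h : A ⊆ clb (clOf cs) B) : clb (clOf cs) A ⊆ clb (clOf cs) B := by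
  intro x hx
  obtain ⟨y, hy, hxy⟩ := mem_clb.mp hx
  obtain ⟨z, hz, hyz⟩ := mem_clb.mp (h hy)
  refine mem_clb.mpr ⟨z, hz, ?_⟩
  exact clOf_trans huniv hinter (by simpa using hyz) hxy

/-- In a standard closure system, each element of a minimal generator is
maximal (w.r.t. the singleton-closure order) in `clb A`. -/
lemma minGen_max (huniv : Set.univ ∈ cs)
    (hinter : ∀ F₁ ∈ cs, ∀ F₂ ∈ cs, F₁ ∩ F₂ ∈ cs) (hstd : IsStandard cs)
    {c x y : U} {A : Set U} (hA : MinGen (clOf cs) c A)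
    (hx : x ∈ A) (hy : y ∈ clb (clOf cs) A) (hxy : x ∈ clOf cs {y}) : x = y := by
  obtain ⟨z, hz, hyz⟩ := mem_clb.mp hy
  have hxz : x ∈ clOf cs {z} :=
    clOf_trans huniv hinter (by simpa using hyz) hxy
  have hzx : z = x := by
    by_contra hne
    have hsub : A ⊆ clOf cs (A \ {x}) := by
      intro w hw
      by_cases hwx : w = x
      · have hzm : ({z} : Set U) ⊆ A \ {x} := by
          simp only [Set.singleton_subset_iff, Set.mem_diff, Set.mem_singleton_iff]
          exact ⟨hz, hne⟩
        rw [hwx]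
        exact clOf_mono hzm hxz
      · exact subset_clOf _ ⟨hw, hwx⟩
    have hc : c ∈ clOf cs (A \ {x}) := clOf_trans huniv hinter hsub hA.2.1
    exact hA.2.2 (A \ {x}) (Set.sdiff_singleton_ssubset.mpr hx) hc
  subst hzx
  exact clOf_antisymm huniv hstd hxy hyz

lemma exists_minGen {c : U} {S : Set U} (hcS : c ∉ S) (hc : c ∈ clOf cs S) :
    ∃ A, A ⊆ S ∧ MinGen (clOf cs) c A := by
  have hfin : {B : Set U | B ⊆ S ∧ c ∈ clOf cs B}.Finite := Set.toFinite _
  obtain ⟨A, hA, hmin⟩ :=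
    Set.Finite.exists_minimalFor id _ hfin ⟨S, subset_rfl, hc⟩
  refine ⟨A, hA.1, fun h => hcS (hA.1 h), hA.2, ?_⟩
  intro A' hA' hc'
  have : A = A' := le_antisymm (hmin ⟨hA'.subset.trans hA.1, hc'⟩ hA'.subset) hA'.subset
  exact hA'.ne this.symm

end Helpers

/-- characterization of the `D`-relation via meet-irreducibles:
for `a ≠ c` in a standard closure system, there is `M ∈ Mi(cs)` with
`c ↑ M ↓ a` iff `a` belongs to some `D`-generator of `c`. -/
theorem stmt18 {U : Type*} [Fintype U] (cs : Set (Set U))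
    (huniv : Set.univ ∈ cs)
    (hinter : ∀ F₁ ∈ cs, ∀ F₂ ∈ cs, F₁ ∩ F₂ ∈ cs)
    (hstd : IsStandard cs)
    (a c : U) (hac : a ≠ c) :
    (∃ M : Set U, MeetIrred cs M ∧ Upp cs c M ∧ a ∉ M ∧
        clOf cs {a} \ {a} ⊆ M) ↔
      ∃ A : Set U, DGen (clOf cs) c A ∧ a ∈ A := by
  constructor
  · rintro ⟨M, hMi, ⟨hcM, hUpp⟩, haM, hclaM⟩
    have hMcs : M ∈ cs := hMi.1
    -- c is in the closure of M ∪ {a}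
    have hcMa : c ∈ clOf cs (M ∪ {a}) := by
      refine hUpp _ (clOf_mem huniv hinter _) ?_
      refine HasSubset.Subset.ssubset_of_ne
        ((Set.subset_union_left).trans (subset_clOf _)) ?_
      intro h
      exact haM (h ▸ subset_clOf (M ∪ {a}) (Set.mem_union_right _ rfl))
    have hcnotMa : c ∉ M ∪ {a} := by
      rintro (h | h)
      · exact hcM h
      · simp only [Set.mem_singleton_iff] at h
        exact hac h.symm
    -- the family of minimal generators of c inside M ∪ {a}
    set G : Set (Set U) := {B | B ⊆ M ∪ {a} ∧ MinGen (clOf cs) c B} with hG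
    have hGne : G.Nonempty := by
      obtain ⟨B, hBsub, hBmin⟩ := exists_minGen hcnotMa hcMa
      exact ⟨B, hBsub, hBmin⟩
    obtain ⟨A, hAG, hAmin⟩ :=
      Set.Finite.exists_minimalFor (clb (clOf cs)) G (Set.toFinite _) hGne
    obtain ⟨hAsub, hAmg⟩ := hAG
    -- a ∈ A
    have haA : a ∈ A := by
      by_contra haA
      have hAM : A ⊆ M := by
        intro x hx
        rcases hAsub hx with h | h
        · exact h
        · exact absurd ((by simpa using h) ▸ hx) haA
      exact hcM (clOf_subset hMcs hAM hAmg.2.1)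
    -- clb A ⊆ M ∪ {a}
    have hclbA : clb (clOf cs) A ⊆ M ∪ {a} := by
      intro x hx
      obtain ⟨y, hy, hxy⟩ := mem_clb.mp hx
      rcases hAsub hy with h | h
      · exact Or.inl (clOf_subset hMcs (by simpa using h) hxy)
      · have hya : y = a := by simpa using h
        rw [hya] at hxy
        by_cases hxa : x = a
        · exact Or.inr (by simp [hxa])
        · exact Or.inl (hclaM ⟨hxy, hxa⟩)
    have hcclb : c ∉ clb (clOf cs) A := fun h => hcnotMa (hclbA h)
    refine ⟨A, ⟨hAmg, hcclb, ?_⟩, haA⟩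
    -- uniqueness
    intro A' hA'mg hA'sub
    have hA'Ma : A' ⊆ M ∪ {a} := hA'sub.trans hclbA
    have hA'G : A' ∈ G := ⟨hA'Ma, hA'mg⟩
    have hclbeq : clb (clOf cs) A = clb (clOf cs) A' :=
      le_antisymm (hAmin hA'G (clb_subset_clb huniv hinter hA'sub)) (clb_subset_clb huniv hinter hA'sub)
    have hA'A : A' ⊆ A := by
      intro x hx
      obtain ⟨y, hy, hxy⟩ := mem_clb.mp (hA'sub hx)
      have hyA' : y ∈ clb (clOf cs) A' := hclbeq ▸ subset_clb hy
      have : x = y := minGen_max huniv hinter hstd hA'mg hx hyA' hxy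
      exact this ▸ hy
    by_contra hne
    exact hAmg.2.2 A' (Set.ssubset_iff_subset_ne.mpr ⟨hA'A, hne⟩) hA'mg.2.1
  · rintro ⟨A, ⟨hmg, hclb, huniq⟩, haA⟩
    set S : Set U := (A \ {a}) ∪ (clOf cs {a} \ {a}) with hS
    have hSclb : S ⊆ clb (clOf cs) A := by
      intro x hx
      rcases hx with h | h
      · exact subset_clb h.1
      · exact mem_clb.mpr ⟨a, haA, h.1⟩
    have hcS : c ∉ S := fun h => hclb (hSclb h)
    have haS : a ∉ S := by
      rintro (h | h)
      · exact h.2 rfl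
      · exact h.2 rfl
    -- c is not in the closure of S
    have hcclS : c ∉ clOf cs S := by
      intro hc
      obtain ⟨A', hA'S, hA'mg⟩ := exists_minGen hcS hc
      have : A' = A := huniq A' hA'mg (hA'S.trans hSclb)
      exact haS (hA'S (this ▸ haA))
    -- take a maximal closed set containing S and avoiding c
    set F : Set (Set U) := {F | F ∈ cs ∧ S ⊆ F ∧ c ∉ F} with hF
    have hFne : F.Nonempty :=
      ⟨clOf cs S, clOf_mem huniv hinter S, subset_clOf S, hcclS⟩
    obtain ⟨M, hMF, hMmax⟩ :=
      Set.Finite.exists_maximalFor id F (Set.toFinite _) hFne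
    obtain ⟨hMcs, hSM, hcM⟩ := hMF
    have hupp : ∀ F' ∈ cs, M ⊂ F' → c ∈ F' := by
      intro F' hF' hMF'
      by_contra hcF'
      exact hMF'.ne (le_antisymm hMF'.subset (hMmax ⟨hF', hSM.trans hMF'.subset, hcF'⟩ hMF'.subset))
    have haM : a ∉ M := by
      intro haM
      have hAM : A ⊆ M := by
        intro x hx
        by_cases hxa : x = a
        · exact hxa ▸ haM
        · exact hSM (Or.inl ⟨hx, hxa⟩)
      exact hcM (clOf_subset hMcs hAM hmg.2.1)
    refine ⟨M, ⟨hMcs, ?_, ?_⟩, ⟨hcM, hupp⟩, haM, fun x hx => hSM (Or.inr hx)⟩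
    · intro h
      exact hcM (h ▸ Set.mem_univ c)
    · intro F₁ hF₁ F₂ hF₂ heq
      by_contra hne
      push_neg at hne
      have h1 : c ∈ F₁ := hupp F₁ hF₁
        (Set.ssubset_iff_subset_ne.mpr ⟨heq ▸ Set.inter_subset_left, (Ne.symm hne.1)⟩)
      have h2 : c ∈ F₂ := hupp F₂ hF₂
        (Set.ssubset_iff_subset_ne.mpr ⟨heq ▸ Set.inter_subset_right, (Ne.symm hne.2)⟩)
      exact hcM (heq ▸ Set.mem_inter h1 h2)
end
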